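/- arXiv:2301.06741 — 8 statements merged into one kernel-verified Lean document; each statement's English description precedes it below -/
import Mathlib

section
/- Let B(u,v) = diag(e^u) K diag(e^v) with K ∈ ℝ₊^{n×n}, K_{ij} = exp(−C_{ij}/γ), and let u_k, v_k be iterates of Sinkhorn's algorithm started from u_0 = v_0 = 0, where at even steps u is updated by u_{k+1} = u_k + ln r − ln(B(u_k,v_k)1ₙ) (and v fixed), and symmetrically at odd steps. Suppose B(u_k,v_k)1ₙ = r (i.e., k−1 was an even update step), where r ∈ Δₙ is a probability vector. Then max_i u_{k,i} − min_i u_{k,i} ≤ R, where R := −ln(K_min · min_{i,j}{r_i, c_j}) and K_min := min_{i,j} K_{ij} = e^{−‖C‖∞/γ}. -/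
/-!
Write `Sᵢ = ∑ⱼ Kᵢⱼ e^{vⱼ}`, so that the marginal condition reads `e^{uᵢ} Sᵢ = rᵢ`. Since
`K_min ≤ Kᵢⱼ ≤ 1`, any two row sums satisfy `K_min Sᵢ' ≤ ∑ⱼ e^{vⱼ} · K_min ≤ Sᵢ`. Hence
`e^{uᵢ} K_min rᵢ' = e^{uᵢ} e^{uᵢ'} K_min Sᵢ' ≤ e^{uᵢ'} rᵢ ≤ e^{uᵢ'}`, and `rᵢ' ≥ min r` gives
`uᵢ - uᵢ' ≤ -log (K_min · min r)`; the `min` with `c` only makes the bound weaker.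
-/

open Finset Real

section RowScaling

variable {ι : Type*} [Fintype ι]

lemma mul_sum_mul_le_sum_mul {K : ι → ι → ℝ} {w : ι → ℝ} {κ : ℝ} (hκ : 0 ≤ κ)
    (hκK : ∀ i j, κ ≤ K i j) (hK1 : ∀ i j, K i j ≤ 1) (hw : ∀ j, 0 ≤ w j) (i i' : ι) :
    κ * ∑ j, K i' j * w j ≤ ∑ j, K i j * w j :=
  calc κ * ∑ j, K i' j * w j ≤ κ * ∑ j, w j := by
        gcongr with j
        exact mul_le_of_le_one_left (hw j) (hK1 i' j)
    _ = ∑ j, κ * w j := mul_sum _ _ _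
    _ ≤ ∑ j, K i j * w j := by gcongr with j; exacts [hw j, hκK i j]

theorem sub_le_neg_log_of_rowMarginal {K : ι → ι → ℝ} {u v r : ι → ℝ} {κ ρ : ℝ}
    (hκ : 0 < κ) (hκK : ∀ i j, κ ≤ K i j) (hK1 : ∀ i j, K i j ≤ 1)
    (hρ : 0 < ρ) (hρr : ∀ i, ρ ≤ r i) (hr1 : ∀ i, r i ≤ 1)
    (hmarg : ∀ i, ∑ j, exp (u i) * K i j * exp (v j) = r i) (i i' : ι) :
    u i - u i' ≤ -log (κ * ρ) := by
  set S : ι → ℝ := fun i => ∑ j, K i j * exp (v j)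
  have hS : ∀ i, exp (u i) * S i = r i := fun i => by
    simp only [S, mul_sum, ← mul_assoc, hmarg]
  have hSS : κ * S i' ≤ S i :=
    mul_sum_mul_le_sum_mul hκ.le hκK hK1 (fun j => (exp_pos _).le) i i'
  have key : exp (u i) * (κ * ρ) ≤ exp (u i') :=
    calc exp (u i) * (κ * ρ) ≤ exp (u i) * (κ * r i') := by gcongr; exact hρr i'
      _ = exp (u i') * (exp (u i) * (κ * S i')) := by rw [← hS i']; ring
      _ ≤ exp (u i') * (exp (u i) * S i) := by gcongr
      _ ≤ exp (u i') := by rw [hS i]; exact mul_le_of_le_one_right (exp_pos _).le (hr1 i)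
  have hlog := log_le_log (by positivity) key
  rw [log_mul (exp_pos _).ne' (mul_pos hκ hρ).ne', log_exp, log_exp] at hlog
  linarith

end RowScaling

theorem stmt_7_general (n : ℕ) [NeZero n] (C : Fin n → Fin n → ℝ) (hC : ∀ i j, 0 ≤ C i j)
    (γ : ℝ) (hγ : 0 < γ)
    (r c : Fin n → ℝ) (hr : ∀ i, 0 < r i) (hc : ∀ j, 0 < c j)
    (hr1 : ∑ i, r i = 1)
    (K : Fin n → Fin n → ℝ) (hK : ∀ i j, K i j = Real.exp (-(C i j) / γ))
    (u v : Fin n → ℝ)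
    (hmarg : ∀ i, ∑ j, Real.exp (u i) * K i j * Real.exp (v j) = r i)
    (Kmin R : ℝ)
    (hKmin : Kmin = Finset.univ.inf' Finset.univ_nonempty fun i =>
      Finset.univ.inf' Finset.univ_nonempty fun j => K i j)
    (hR : R = -Real.log (Kmin *
      min (Finset.univ.inf' Finset.univ_nonempty r)
        (Finset.univ.inf' Finset.univ_nonempty c))) :
    Finset.univ.sup' Finset.univ_nonempty u -
      Finset.univ.inf' Finset.univ_nonempty u ≤ R := by
  have hKmin_le : ∀ i j, Kmin ≤ K i j := fun i j =>
    hKmin ▸ (inf'_le _ (mem_univ i)).trans (inf'_le _ (mem_univ j))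
  have hKmin_pos : 0 < Kmin := hKmin ▸ (lt_inf'_iff _).2 fun i _ =>
    (lt_inf'_iff _).2 fun j _ => hK i j ▸ exp_pos _
  have hK1 : ∀ i j, K i j ≤ 1 := fun i j => hK i j ▸
    exp_le_one_iff.2 (div_nonpos_of_nonpos_of_nonneg (neg_nonpos.2 (hC i j)) hγ.le)
  have hρ : 0 < min (univ.inf' univ_nonempty r) (univ.inf' univ_nonempty c) :=
    lt_min ((lt_inf'_iff _).2 fun i _ => hr i) ((lt_inf'_iff _).2 fun j _ => hc j)
  have hρr : ∀ i, min (univ.inf' univ_nonempty r) (univ.inf' univ_nonempty c) ≤ r i :=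
    fun i => (min_le_left _ _).trans (inf'_le _ (mem_univ i))
  have hr_le : ∀ i, r i ≤ 1 := fun i =>
    hr1 ▸ single_le_sum (fun j _ => (hr j).le) (mem_univ i)
  obtain ⟨imax, -, hmax⟩ := exists_mem_eq_sup' univ_nonempty u
  obtain ⟨imin, -, hmin⟩ := exists_mem_eq_inf' univ_nonempty u
  rw [hmax, hmin, hR]
  exact sub_le_neg_log_of_rowMarginal hKmin_pos hKmin_le hK1 hρ hρr hr_le hmarg imax imin

theorem stmt_7 (n : ℕ) [NeZero n] (C : Fin n → Fin n → ℝ) (hC : ∀ i j, 0 ≤ C i j)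
    (γ : ℝ) (hγ : 0 < γ)
    (r c : Fin n → ℝ) (hr : ∀ i, 0 < r i) (hc : ∀ j, 0 < c j)
    (hr1 : ∑ i, r i = 1) (hc1 : ∑ j, c j = 1)
    (K : Fin n → Fin n → ℝ) (hK : ∀ i j, K i j = Real.exp (-(C i j) / γ))
    (u v : Fin n → ℝ)
    (hmarg : ∀ i, ∑ j, Real.exp (u i) * K i j * Real.exp (v j) = r i)
    (Kmin R : ℝ)
    (hKmin : Kmin = Finset.univ.inf' Finset.univ_nonempty fun i =>
      Finset.univ.inf' Finset.univ_nonempty fun j => K i j)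
    (hR : R = -Real.log (Kmin *
      min (Finset.univ.inf' Finset.univ_nonempty r)
        (Finset.univ.inf' Finset.univ_nonempty c))) :
    Finset.univ.sup' Finset.univ_nonempty u -
      Finset.univ.inf' Finset.univ_nonempty u ≤ R :=
  stmt_7_general n C hC γ hγ r c hr hc hr1 K hK u v hmarg Kmin R hKmin hR
end

section
/- With notation as in the Sinkhorn dual analysis, let ψ̃(u,v) := ψ(u,v) − ψ(u*,v*) where (u*,v*) minimizes ψ. Then for iterates (u_k,v_k) of Sinkhorn's algorithm (k ≥ 1), ψ̃(u_k,v_k) ≤ R·(‖B_k 1ₙ − r‖₁ + ‖B_kᵀ 1ₙ − c‖₁), where B_k = B(u_k,v_k) and R = −ln(K_min min_{i,j}{r_i,c_j}). -/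
lemma exp_lin (s t : ℝ) : Real.exp s * (1 + t - s) ≤ Real.exp t := by
  have h := Real.add_one_le_exp (t - s)
  have h2 := mul_le_mul_of_nonneg_left h (Real.exp_pos s).le
  rw [← Real.exp_add] at h2
  have h3 : s + (t - s) = t := by ring
  rw [h3] at h2
  nlinarith [Real.exp_pos s]

lemma center_bound {n : ℕ} (hn : 0 < n) (w d : Fin n → ℝ) (R : ℝ)
    (hw : ∀ i i', w i - w i' ≤ R) (hd : ∑ j, d j = 0) :
    ∑ j, w j * d j ≤ R / 2 * ∑ j, |d j| := by
  have hne : (Finset.univ : Finset (Fin n)).Nonempty := ⟨⟨0, hn⟩, Finset.mem_univ _⟩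
  set M := Finset.univ.sup' hne w with hM
  set m0 := Finset.univ.inf' hne w with hm0
  have key : ∀ j, |w j - (M + m0) / 2| ≤ R / 2 := by
    intro j
    have h1 : w j ≤ M := Finset.le_sup' w (Finset.mem_univ j)
    have h2 : m0 ≤ w j := Finset.inf'_le w (Finset.mem_univ j)
    have h3 : M - m0 ≤ R := by
      obtain ⟨i, _, hi⟩ := Finset.exists_mem_eq_sup' hne w
      obtain ⟨i', _, hi'⟩ := Finset.exists_mem_eq_inf' hne w
      rw [hM, hm0, hi, hi']; exact hw i i'
    rw [abs_le]; constructor <;> linarith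
  have e1 : ∑ j, w j * d j = ∑ j, (w j - (M + m0) / 2) * d j := by
    simp [sub_mul, Finset.sum_sub_distrib, ← Finset.mul_sum, hd]
  rw [e1, Finset.mul_sum]
  apply Finset.sum_le_sum
  intro j _
  calc (w j - (M + m0) / 2) * d j ≤ |(w j - (M + m0) / 2) * d j| := le_abs_self _
    _ = |w j - (M + m0) / 2| * |d j| := abs_mul _ _
    _ ≤ R / 2 * |d j| := mul_le_mul_of_nonneg_right (key j) (abs_nonneg _)

theorem stmt_8 (n : ℕ) (C : Fin n → Fin n → ℝ) (γ : ℝ) (hγ : 0 < γ)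
    (r c : Fin n → ℝ) (hr : ∀ i, 0 < r i) (hc : ∀ j, 0 < c j)
    (hr1 : ∑ i, r i = 1) (hc1 : ∑ j, c j = 1)
    (B : (Fin n → ℝ) → (Fin n → ℝ) → Fin n → Fin n → ℝ)
    (hB : ∀ u v i j, B u v i j = Real.exp (u i) * Real.exp (-(C i j) / γ) * Real.exp (v j))
    (ψ : (Fin n → ℝ) → (Fin n → ℝ) → ℝ)
    (hψ : ∀ u v, ψ u v = (∑ i, ∑ j, B u v i j) - (∑ i, u i * r i) - ∑ i, v i * c i)
    (u v ustar vstar : Fin n → ℝ) (R : ℝ)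
    (hmin : ∀ a b, ψ ustar vstar ≤ ψ a b)
    (hmarg : (∀ i, ∑ j, B u v i j = r i) ∨ (∀ j, ∑ i, B u v i j = c j))
    (hosc : ∀ w ∈ [u, v, ustar, vstar], ∀ i i', w i - w i' ≤ R) :
    ψ u v - ψ ustar vstar ≤
      R * ((∑ i, |(∑ j, B u v i j) - r i|) + ∑ j, |(∑ i, B u v i j) - c j|) := by
  rcases Nat.eq_zero_or_pos n with h0 | hn
  · subst h0; simp [hψ]
  have hR : 0 ≤ R := by
    have := hosc u (by simp) ⟨0, hn⟩ ⟨0, hn⟩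
    linarith
  set a := fun i => ∑ j, B u v i j with ha
  set b := fun j => ∑ i, B u v i j with hb
  -- total mass identity
  have htot : ∑ i, a i = ∑ j, b j := Finset.sum_comm
  -- convexity step
  have hsum : ∑ i, ∑ j, (B u v i j - B ustar vstar i j
      - (u i - ustar i + (v j - vstar j)) * B u v i j) ≤ 0 := by
    apply Finset.sum_nonpos; intro i _
    apply Finset.sum_nonpos; intro j _
    rw [hB, hB]
    have hK : 0 < Real.exp (-(C i j) / γ) := Real.exp_pos _
    have key := exp_lin (u i + v j) (ustar i + vstar j)
    have g1 : Real.exp (u i) * Real.exp (-(C i j) / γ) * Real.exp (v j)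
        = Real.exp (-(C i j) / γ) * Real.exp (u i + v j) := by rw [Real.exp_add]; ring
    have g2 : Real.exp (ustar i) * Real.exp (-(C i j) / γ) * Real.exp (vstar j)
        = Real.exp (-(C i j) / γ) * Real.exp (ustar i + vstar j) := by rw [Real.exp_add]; ring
    rw [g1, g2]
    have h := mul_le_mul_of_nonneg_left key hK.le
    nlinarith [h]
  have hconv : ψ u v - ψ ustar vstar ≤
      (∑ i, (u i - ustar i) * (a i - r i)) + ∑ j, (v j - vstar j) * (b j - c j) := by
    have e2 : ∑ j, (v j - vstar j) * b j = ∑ i, ∑ j, (v j - vstar j) * B u v i j := by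
      simp only [hb, Finset.mul_sum]
      exact Finset.sum_comm
    have e1 : ∑ i, (u i - ustar i) * a i = ∑ i, ∑ j, (u i - ustar i) * B u v i j := by
      simp only [ha, Finset.mul_sum]
    have e3 : ∑ i, ∑ j, (B u v i j - B ustar vstar i j
        - (u i - ustar i + (v j - vstar j)) * B u v i j)
        = (∑ i, ∑ j, B u v i j) - (∑ i, ∑ j, B ustar vstar i j)
          - ((∑ i, ∑ j, (u i - ustar i) * B u v i j)
            + ∑ i, ∑ j, (v j - vstar j) * B u v i j) := by
      simp [Finset.sum_sub_distrib, Finset.sum_add_distrib, add_mul]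
    rw [e3] at hsum
    have hX : ∑ i, (u i - ustar i) * (a i - r i)
        = (∑ i, (u i - ustar i) * a i) - ((∑ i, u i * r i) - ∑ i, ustar i * r i) := by
      have h : ∀ i ∈ Finset.univ, (u i - ustar i) * (a i - r i)
          = (u i - ustar i) * a i - (u i * r i - ustar i * r i) := fun i _ => by ring
      rw [Finset.sum_congr rfl h]
      simp [Finset.sum_sub_distrib]
    have hY : ∑ j, (v j - vstar j) * (b j - c j)
        = (∑ j, (v j - vstar j) * b j) - ((∑ j, v j * c j) - ∑ j, vstar j * c j) := by
      have h : ∀ j ∈ Finset.univ, (v j - vstar j) * (b j - c j)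
          = (v j - vstar j) * b j - (v j * c j - vstar j * c j) := fun j _ => by ring
      rw [Finset.sum_congr rfl h]
      simp [Finset.sum_sub_distrib]
    rw [hψ, hψ, hX, hY, e1, e2]
    linarith
  rcases hmarg with hra | hcb
  · -- a = r
    have hz1 : ∑ i, |a i - r i| = 0 := by simp [ha, hra]
    have hz2 : ∑ i, (u i - ustar i) * (a i - r i) = 0 := by
      apply Finset.sum_eq_zero; intro i _; rw [show a i = r i from hra i]; ring
    have hd0 : ∑ j, (b j - c j) = 0 := by
      have : ∑ j, b j = 1 := by
        rw [← htot]
        calc ∑ i, a i = ∑ i, r i := Finset.sum_congr rfl fun i _ => hra i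
          _ = 1 := hr1
      rw [Finset.sum_sub_distrib, this, hc1]; ring
    have b1 : ∑ j, v j * (b j - c j) ≤ R / 2 * ∑ j, |b j - c j| :=
      center_bound hn v _ R (hosc v (by simp)) hd0
    have b2 : ∑ j, (fun j => -vstar j) j * (b j - c j) ≤ R / 2 * ∑ j, |b j - c j| :=
      center_bound hn (fun j => -vstar j) _ R
        (fun i i' => by have := hosc vstar (by simp) i' i; show -vstar i - -vstar i' ≤ R; linarith) hd0
    have split : ∑ j, (v j - vstar j) * (b j - c j)
        = ∑ j, v j * (b j - c j) + ∑ j, (fun j => -vstar j) j * (b j - c j) := by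
      rw [← Finset.sum_add_distrib]
      apply Finset.sum_congr rfl; intro j _; ring
    have habs : ∑ i, |(∑ j, B u v i j) - r i| = ∑ i, |a i - r i| := rfl
    have habs2 : ∑ j, |(∑ i, B u v i j) - c j| = ∑ j, |b j - c j| := rfl
    rw [habs, habs2, hz1]
    have hnn : 0 ≤ ∑ j, |b j - c j| := Finset.sum_nonneg fun j _ => abs_nonneg _
    nlinarith [hconv, b1, b2, split, hz2]
  · -- b = c
    have hz1 : ∑ j, |b j - c j| = 0 := by simp [hb, hcb]
    have hz2 : ∑ j, (v j - vstar j) * (b j - c j) = 0 := by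
      apply Finset.sum_eq_zero; intro j _; rw [show b j = c j from hcb j]; ring
    have hd0 : ∑ i, (a i - r i) = 0 := by
      have : ∑ i, a i = 1 := by
        rw [htot]
        calc ∑ j, b j = ∑ j, c j := Finset.sum_congr rfl fun j _ => hcb j
          _ = 1 := hc1
      rw [Finset.sum_sub_distrib, this, hr1]; ring
    have b1 : ∑ i, u i * (a i - r i) ≤ R / 2 * ∑ i, |a i - r i| :=
      center_bound hn u _ R (hosc u (by simp)) hd0
    have b2 : ∑ i, (fun i => -ustar i) i * (a i - r i) ≤ R / 2 * ∑ i, |a i - r i| :=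
      center_bound hn (fun i => -ustar i) _ R
        (fun i i' => by have := hosc ustar (by simp) i' i; show -ustar i - -ustar i' ≤ R; linarith) hd0
    have split : ∑ i, (u i - ustar i) * (a i - r i)
        = ∑ i, u i * (a i - r i) + ∑ i, (fun i => -ustar i) i * (a i - r i) := by
      rw [← Finset.sum_add_distrib]
      apply Finset.sum_congr rfl; intro i _; ring
    have habs : ∑ i, |(∑ j, B u v i j) - r i| = ∑ i, |a i - r i| := rfl
    have habs2 : ∑ j, |(∑ i, B u v i j) - c j| = ∑ j, |b j - c j| := rfl
    rw [habs, habs2, hz1]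
    have hnn : 0 ≤ ∑ i, |a i - r i| := Finset.sum_nonneg fun i _ => abs_nonneg _
    nlinarith [hconv, b1, b2, split, hz2]
end

section
/- At an even Sinkhorn iteration, where u_{k+1} = u_k + ln r − ln(B(u_k,v_k)1ₙ) and v_{k+1} = v_k, the dual objective decreases exactly by the KL divergence: ψ(u_k,v_k) − ψ(u_{k+1},v_{k+1}) = KL(r ‖ B(u_k,v_k)1ₙ). -/
theorem stmt_9 (n : ℕ) (K : Fin n → Fin n → ℝ) (hK : ∀ i j, 0 < K i j)
    (r c : Fin n → ℝ) (hr : ∀ i, 0 < r i) (hr1 : ∑ i, r i = 1)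
    (B : (Fin n → ℝ) → (Fin n → ℝ) → Fin n → Fin n → ℝ)
    (hB : ∀ u v i j, B u v i j = Real.exp (u i) * K i j * Real.exp (v j))
    (ψ : (Fin n → ℝ) → (Fin n → ℝ) → ℝ)
    (hψ : ∀ u v, ψ u v = (∑ i, ∑ j, B u v i j) - (∑ i, u i * r i) - ∑ i, v i * c i)
    (u v u' : Fin n → ℝ)
    (hsum : ∑ i, ∑ j, B u v i j = 1)
    (hu' : ∀ i, u' i = u i + Real.log (r i) - Real.log (∑ j, B u v i j)) :
    ψ u v - ψ u' v = ∑ i, r i * Real.log (r i / ∑ j, B u v i j) := by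
  have hs : ∀ i, 0 < ∑ j, B u v i j := by
    intro i
    apply Finset.sum_pos
    · intro j _
      rw [hB]
      exact mul_pos (mul_pos (Real.exp_pos _) (hK i j)) (Real.exp_pos _)
    · exact ⟨⟨0, Nat.pos_of_ne_zero (by rintro rfl; exact absurd i.2 (Nat.not_lt_zero _))⟩,
        Finset.mem_univ _⟩
  have hrow : ∀ i, ∑ j, B u' v i j = r i := by
    intro i
    have : ∀ j, B u' v i j = (r i / ∑ k, B u v i k) * B u v i j := by
      intro j
      rw [hB, hB, hu']
      rw [Real.exp_sub, Real.exp_add, Real.exp_log (hr i), Real.exp_log (hs i)]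
      ring
    rw [Finset.sum_congr rfl fun j _ => this j, ← Finset.mul_sum,
      div_mul_cancel₀ _ (hs i).ne']
  have hsum' : ∑ i, ∑ j, B u' v i j = 1 := by
    rw [Finset.sum_congr rfl fun i _ => hrow i]; exact hr1
  rw [hψ, hψ, hsum, hsum']
  have : ∀ i, u' i * r i - u i * r i = r i * Real.log (r i / ∑ j, B u v i j) := by
    intro i
    rw [hu', Real.log_div (hr i).ne' (hs i).ne']
    ring
  have key : (∑ i, u' i * r i) - ∑ i, u i * r i
      = ∑ i, r i * Real.log (r i / ∑ j, B u v i j) := by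
    rw [← Finset.sum_sub_distrib]
    exact Finset.sum_congr rfl fun i _ => this i
  linarith
end

section
/- Sinkhorn's algorithm, run with stopping criterion ‖B(u_k,v_k)1ₙ − r‖₁ + ‖B(u_k,v_k)ᵀ1ₙ − c‖₁ < ε₀, terminates after at most k ≤ 2 + 4R/ε₀ iterations, where R = −ln(e^{−‖C‖∞/γ} · min_{i,j}{r_i, c_j}). -/
/-!
Along the iteration the dual objective `ψ(u, v) = 1ᵀ B(u, v) 1 - ⟨r, u⟩ - ⟨c, v⟩` drops at each
half-step by `KL(r ‖ B 1)` (or its column analogue), hence, by Pinsker's inequality, by at least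
half the square of the marginal error. From the second half-step on, the entries of `u` and of `v`
each spread over at most `R`, so convexity of `ψ` bounds its excess over any later value by `R`
times the current error. A potential equal to `2 R² / ψ` above the level `R ε₀` and linear in `ψ`
below it therefore grows by at least one at every half-step whose error exceeds `ε₀`, while staying
in `[0, 4 R / ε₀]`.
-/

open Real Finset Function

-- `t` times the left side is `3 (t - 1)² / (2 t + 4) + t - 1`: the pointwise form of Pinsker.
theorem sub_one_mul_div_le_log {t : ℝ} (ht : 0 < t) :
    (t - 1) * (5 * t + 1) / (2 * t * (t + 2)) ≤ log t := by
  set h : ℝ → ℝ := fun t => log t - (t - 1) * (5 * t + 1) / (2 * t * (t + 2))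
  have hderiv : ∀ t > 0, HasDerivAt h ((t - 1) ^ 3 / (t ^ 2 * (t + 2) ^ 2)) t := by
    intro t ht
    have hden : 2 * t * (t + 2) ≠ 0 := by positivity
    have := (hasDerivAt_log ht.ne').sub
      ((((hasDerivAt_id' t).sub_const 1).mul (((hasDerivAt_id' t).const_mul 5).add_const 1)).div
        (((hasDerivAt_id' t).const_mul 2).mul ((hasDerivAt_id' t).add_const 2)) hden)
    exact this.congr_deriv (by simp only [Pi.mul_apply]; field_simp; ring)
  have hcont : ContinuousOn h (Set.Ioi 0) := fun t ht =>
    (hderiv t ht).continuousAt.continuousWithinAt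
  have h1 : h 1 = 0 := by norm_num [h]
  suffices 0 ≤ h t by simpa [h, sub_nonneg] using this
  rcases le_total 1 t with h1t | ht1
  · have hmono : MonotoneOn h (Set.Ici 1) :=
      monotoneOn_of_hasDerivWithinAt_nonneg (convex_Ici 1)
        (hcont.mono fun x hx => show (0 : ℝ) < x from zero_lt_one.trans_le hx)
        (fun x hx => by
          rw [interior_Ici] at hx ⊢
          exact (hderiv x (zero_lt_one.trans hx)).hasDerivWithinAt)
        (fun x hx => by
          rw [interior_Ici] at hx
          have : 0 ≤ x - 1 := by linarith [hx.out]
          positivity)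
    simpa [h1] using hmono Set.self_mem_Ici h1t h1t
  · have hanti : AntitoneOn h (Set.Ioc 0 1) :=
      antitoneOn_of_hasDerivWithinAt_nonpos (convex_Ioc 0 1)
        (hcont.mono Set.Ioc_subset_Ioi_self)
        (fun x hx => by
          rw [interior_Ioc] at hx ⊢
          exact (hderiv x hx.1).hasDerivWithinAt)
        (fun x hx => by
          rw [interior_Ioc] at hx
          exact div_nonpos_of_nonpos_of_nonneg
            (Odd.pow_nonpos (by decide) (by linarith [hx.2])) (by positivity))
    simpa [h1] using hanti ⟨ht, ht1⟩ ⟨one_pos, le_rfl⟩ ht1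

theorem three_mul_sq_sub_div_le {x y : ℝ} (hx : 0 < x) (hy : 0 < y) :
    3 * (x - y) ^ 2 / (2 * x + 4 * y) ≤ x * log (x / y) - x + y := by
  have key := mul_le_mul_of_nonneg_left (sub_one_mul_div_le_log (div_pos hx hy)) hx.le
  have : x * ((x / y - 1) * (5 * (x / y) + 1) / (2 * (x / y) * (x / y + 2)))
      = 3 * (x - y) ^ 2 / (2 * x + 4 * y) + x - y := by
    field_simp
    ring
  linarith

theorem sq_sum_abs_sub_div_two_le_sum_mul_log_div {ι : Type*} [Fintype ι] {p q : ι → ℝ}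
    (hp : ∀ i, 0 < p i) (hq : ∀ i, 0 < q i) (hp1 : ∑ i, p i = 1) (hq1 : ∑ i, q i = 1) :
    (∑ i, |p i - q i|) ^ 2 / 2 ≤ ∑ i, p i * log (p i / q i) := by
  have hw : ∀ i ∈ univ, 0 < (2 * p i + 4 * q i) / 3 := fun i _ => by
    have := hp i; have := hq i; positivity
  have hwsum : ∑ i, (2 * p i + 4 * q i) / 3 = 2 := by
    rw [← sum_div, sum_add_distrib, ← mul_sum, ← mul_sum, hp1, hq1]; norm_num
  calc (∑ i, |p i - q i|) ^ 2 / 2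
      ≤ ∑ i, |p i - q i| ^ 2 / ((2 * p i + 4 * q i) / 3) := by
        simpa [hwsum] using sq_sum_div_le_sum_sq_div univ (fun i => |p i - q i|) hw
    _ ≤ ∑ i, (p i * log (p i / q i) - p i + q i) := by
        gcongr with i
        rw [sq_abs, div_div_eq_mul_div, mul_comm]
        exact three_mul_sq_sub_div_le (hp i) (hq i)
    _ = ∑ i, p i * log (p i / q i) := by
        rw [sum_add_distrib, sum_sub_distrib, hp1, hq1]; ring

theorem sum_mul_le_sum_abs_mul {ι : Type*} [Fintype ι] [Nonempty ι] {x y : ι → ℝ} {R : ℝ}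
    (hx : ∑ i, x i = 0) (hy : ∀ i i', y i - y i' ≤ 2 * R) :
    ∑ i, x i * y i ≤ (∑ i, |x i|) * R := by
  obtain ⟨i₁, -, hi₁⟩ := exists_mem_eq_sup' univ_nonempty y
  obtain ⟨i₂, -, hi₂⟩ := exists_mem_eq_inf' univ_nonempty y
  set μ := (y i₁ + y i₂) / 2 with hμ_def
  have hμ : ∀ i, |y i - μ| ≤ R := fun i => by
    have h₁ : y i ≤ y i₁ := hi₁ ▸ le_sup' y (mem_univ i)
    have h₂ : y i₂ ≤ y i := hi₂ ▸ inf'_le y (mem_univ i)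
    have := hy i₁ i₂
    rw [abs_le]; constructor <;> linarith [hμ_def]
  calc ∑ i, x i * y i = ∑ i, x i * (y i - μ) := by
        simp only [mul_sub, sum_sub_distrib, ← sum_mul, hx, zero_mul, sub_zero]
    _ ≤ ∑ i, |x i| * R := sum_le_sum fun i _ => by
        calc x i * (y i - μ) ≤ |x i * (y i - μ)| := le_abs_self _
          _ = |x i| * |y i - μ| := abs_mul _ _
          _ ≤ |x i| * R := mul_le_mul_of_nonneg_left (hμ i) (abs_nonneg _)
    _ = (∑ i, |x i|) * R := by rw [sum_mul]

theorem log_sub_log_le_neg_log {ι : Type*} [Fintype ι] {p : ι → ℝ} {ρ : ℝ} (hρ : 0 < ρ)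
    (hρp : ∀ i, ρ ≤ p i) (hp1 : ∑ i, p i = 1) (i i' : ι) :
    log (p i) - log (p i') ≤ -log ρ := by
  have hp : ∀ i, 0 ≤ p i := fun i => hρ.le.trans (hρp i)
  have : p i ≤ 1 := hp1 ▸ single_le_sum (fun i _ => hp i) (mem_univ i)
  linarith [log_nonpos (hp i) this, log_le_log hρ (hρp i')]

theorem exp_neg_div_le_exp_mul_exp_neg_div {x y M γ : ℝ} (hγ : 0 < γ) (hx : 0 ≤ x) (hy : y ≤ M) :
    exp (-x / γ) ≤ exp (M / γ) * exp (-y / γ) := by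
  rw [← exp_add, exp_le_exp, ← add_div, div_le_div_iff_of_pos_right hγ]
  linarith

/-- Above the level `R * ε` the decrease `x ^ 2 / (2 * R ^ 2)` makes `2 * R ^ 2 / x` grow by one
per step, below it the decrease `ε ^ 2 / 2` does the same for the linear branch. -/
noncomputable def switchingPotential (R ε x : ℝ) : ℝ :=
  if R * ε < x then 2 * R ^ 2 / x else 2 * R / ε + 2 * (R * ε - x) / ε ^ 2

section switchingPotential

variable {R ε : ℝ}

theorem switchingPotential_nonneg (hR : 0 ≤ R) (hε : 0 < ε) (x : ℝ) :
    0 ≤ switchingPotential R ε x := by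
  unfold switchingPotential
  split_ifs with hx
  · have : 0 < x := (mul_nonneg hR hε.le).trans_lt hx
    positivity
  · have : 0 ≤ R * ε - x := by linarith
    positivity

theorem switchingPotential_le (hR : 0 ≤ R) (hε : 0 < ε) {x : ℝ} (hx : 0 ≤ x) :
    switchingPotential R ε x ≤ 4 * R / ε := by
  unfold switchingPotential
  split_ifs with hRx
  · have hx0 : 0 < x := (mul_nonneg hR hε.le).trans_lt hRx
    rw [div_le_div_iff₀ hx0 hε]
    nlinarith [mul_le_mul_of_nonneg_left hRx.le hR]
  · have : 2 * (R * ε - x) / ε ^ 2 ≤ 2 * R / ε := by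
      rw [div_le_div_iff₀ (by positivity) hε]
      nlinarith
    linarith [show 4 * R / ε = 2 * R / ε + 2 * R / ε by ring]

theorem switchingPotential_add_one_le (hR : 0 ≤ R) (hε : 0 < ε) {x y e : ℝ} (he : ε < e)
    (hx : x ≤ R * e) (hxy : e ^ 2 / 2 ≤ x - y) :
    switchingPotential R ε x + 1 ≤ switchingPotential R ε y := by
  have hε2 : ε ^ 2 < e ^ 2 := by gcongr
  unfold switchingPotential
  split_ifs with hRx hRy hRy
  · have hy : 0 < y := (mul_nonneg hR hε.le).trans_lt hRy
    have hx : 0 < x := by linarith [sq_nonneg e]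
    have : x ^ 2 ≤ R ^ 2 * e ^ 2 := by nlinarith
    rw [div_add_one hx.ne', div_le_div_iff₀ hx hy]
    nlinarith
  · -- Split `x - y` at the level `R * ε`; each part is paid for by one of the two decrease bounds.
    have hx0 : 0 < x := (mul_nonneg hR hε.le).trans_lt hRx
    have hR0 : 0 < R := by
      by_contra! h
      nlinarith
    have hd : 0 < x - y := by linarith [sq_nonneg e]
    have hεx : ε * x ≤ 2 * R * (x - y) := by
      have : x ^ 2 ≤ 2 * R ^ 2 * (x - y) := by nlinarith
      nlinarith
    have hx_part : (x - R * ε) / (x - y) ≤ 2 * R / ε - 2 * R ^ 2 / x := by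
      rw [show 2 * R / ε - 2 * R ^ 2 / x = 2 * R * (x - R * ε) / (ε * x) by field_simp,
        div_le_div_iff₀ hd (by positivity)]
      nlinarith
    have hy_part : (R * ε - y) / (x - y) ≤ 2 * (R * ε - y) / ε ^ 2 := by
      rw [div_le_div_iff₀ hd (by positivity)]
      nlinarith
    have : (x - R * ε) / (x - y) + (R * ε - y) / (x - y) = 1 := by
      field_simp; ring
    linarith
  · linarith [sq_nonneg e]
  · have : 1 ≤ 2 * (x - y) / ε ^ 2 := by rw [le_div_iff₀ (by positivity)]; linarith
    linarith [show 2 * (R * ε - y) / ε ^ 2 = 2 * (R * ε - x) / ε ^ 2 + 2 * (x - y) / ε ^ 2 by ring]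

end switchingPotential

theorem exists_le_of_sq_le_sub {ψ e : ℕ → ℝ} {R ε : ℝ} (hR : 0 ≤ R) (hε : 0 < ε)
    (hψ : ∀ k m, ψ k - ψ m ≤ R * e k) (hdec : ∀ k, e k ^ 2 / 2 ≤ ψ k - ψ (k + 1)) :
    ∃ k : ℕ, (k : ℝ) ≤ 4 * R / ε ∧ e k ≤ ε := by
  by_contra! he
  set N := ⌊4 * R / ε⌋₊ + 1
  have hgrow : ∀ k ≤ N, switchingPotential R ε (ψ 0 - ψ N) + k ≤
      switchingPotential R ε (ψ k - ψ N) := by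
    intro k hk
    induction k with
    | zero => simp
    | succ k ih =>
      have hk' : (k : ℝ) ≤ 4 * R / ε := (Nat.le_floor_iff (by positivity)).1 (by omega)
      have := switchingPotential_add_one_le hR hε (he k hk') (hψ k N)
        (y := ψ (k + 1) - ψ N) (by linarith [hdec k])
      push_cast
      linarith [ih (by omega)]
  have hN : 4 * R / ε < N := by simpa [N] using Nat.lt_floor_add_one (4 * R / ε)
  have := hgrow N le_rfl
  have := switchingPotential_nonneg hR hε (ψ 0 - ψ N)
  have := switchingPotential_le hR hε (sub_self (ψ N)).ge
  linarith

namespace Sinkhorn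

variable {ι κ : Type*}

noncomputable def scaling (K : ι → κ → ℝ) (u : ι → ℝ) (v : κ → ℝ) (i : ι) (j : κ) : ℝ :=
  exp (u i) * K i j * exp (v j)

theorem scaling_swap (K : ι → κ → ℝ) (u : ι → ℝ) (v : κ → ℝ) (i : ι) (j : κ) :
    scaling (swap K) v u j i = scaling K u v i j := by
  simp only [scaling, swap]; ring

variable {K : ι → κ → ℝ} {r : ι → ℝ} {c : κ → ℝ}

theorem scaling_pos (hK : ∀ i j, 0 < K i j) (u : ι → ℝ) (v : κ → ℝ) (i : ι) (j : κ) :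
    0 < scaling K u v i j := by
  have := hK i j; unfold scaling; positivity

section

variable [Fintype κ]

noncomputable def rowUpdate (K : ι → κ → ℝ) (r : ι → ℝ) (u : ι → ℝ) (v : κ → ℝ) (i : ι) : ℝ :=
  u i + log (r i) - log (∑ j, scaling K u v i j)

theorem sum_scaling_pos [Nonempty κ] (hK : ∀ i j, 0 < K i j) (u : ι → ℝ) (v : κ → ℝ) (i : ι) :
    0 < ∑ j, scaling K u v i j :=
  sum_pos (fun j _ => scaling_pos hK u v i j) univ_nonempty

theorem scaling_rowUpdate [Nonempty κ] (hK : ∀ i j, 0 < K i j) (hr : ∀ i, 0 < r i)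
    (u : ι → ℝ) (v : κ → ℝ) (i : ι) (j : κ) :
    scaling K (rowUpdate K r u v) v i j = scaling K u v i j * r i / ∑ j', scaling K u v i j' := by
  have := sum_scaling_pos hK u v i
  rw [scaling, scaling, rowUpdate, exp_sub, exp_add, exp_log (hr i), exp_log this]
  field_simp

theorem sum_scaling_rowUpdate [Nonempty κ] (hK : ∀ i j, 0 < K i j) (hr : ∀ i, 0 < r i)
    (u : ι → ℝ) (v : κ → ℝ) (i : ι) :
    ∑ j, scaling K (rowUpdate K r u v) v i j = r i := by
  simp only [scaling_rowUpdate hK hr, ← sum_div, ← sum_mul]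
  field_simp [(sum_scaling_pos hK u v i).ne']

theorem rowUpdate_eq [Nonempty κ] (hK : ∀ i j, 0 < K i j) (u : ι → ℝ) (v : κ → ℝ) (i : ι) :
    rowUpdate K r u v i = log (r i) - log (∑ j, K i j * exp (v j)) := by
  have hS : 0 < ∑ j, K i j * exp (v j) :=
    sum_pos (fun j _ => mul_pos (hK i j) (exp_pos _)) univ_nonempty
  have : ∑ j, scaling K u v i j = exp (u i) * ∑ j, K i j * exp (v j) := by
    simp only [scaling, mul_sum, mul_assoc]
  rw [rowUpdate, this, log_mul (exp_pos _).ne' hS.ne', log_exp]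
  ring

theorem rowUpdate_sub_le [Nonempty κ] (hK : ∀ i j, 0 < K i j) {a : ℝ}
    (ha : ∀ i i' j, K i' j ≤ a * K i j) (u : ι → ℝ) (v : κ → ℝ) (i i' : ι) :
    rowUpdate K r u v i - rowUpdate K r u v i' ≤ log (r i) - log (r i') + log a := by
  set S : ι → ℝ := fun i => ∑ j, K i j * exp (v j)
  have hS : ∀ i, 0 < S i := fun i => sum_pos (fun j _ => mul_pos (hK i j) (exp_pos _)) univ_nonempty
  have hSa : S i' ≤ a * S i := by
    simp only [S, mul_sum, ← mul_assoc]
    exact sum_le_sum fun j _ => mul_le_mul_of_nonneg_right (ha i i' j) (exp_pos _).le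
  have ha0 : 0 < a := pos_of_mul_pos_left ((hS i').trans_le hSa) (hS i).le
  have := log_le_log (hS i') hSa
  rw [log_mul ha0.ne' (hS i).ne'] at this
  rw [rowUpdate_eq hK, rowUpdate_eq hK]
  linarith

end

section

variable [Fintype ι]

noncomputable def colUpdate (K : ι → κ → ℝ) (c : κ → ℝ) (u : ι → ℝ) (v : κ → ℝ) (j : κ) : ℝ :=
  v j + log (c j) - log (∑ i, scaling K u v i j)

theorem colUpdate_eq_rowUpdate_swap (K : ι → κ → ℝ) (c : κ → ℝ) (u : ι → ℝ) (v : κ → ℝ) :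
    colUpdate K c u v = rowUpdate (swap K) c v u := by
  ext j; simp only [colUpdate, rowUpdate, scaling_swap]

theorem sum_scaling_colUpdate [Nonempty ι] (hK : ∀ i j, 0 < K i j) (hc : ∀ j, 0 < c j)
    (u : ι → ℝ) (v : κ → ℝ) (j : κ) :
    ∑ i, scaling K u (colUpdate K c u v) i j = c j := by
  rw [colUpdate_eq_rowUpdate_swap]
  simpa only [scaling_swap] using sum_scaling_rowUpdate (K := swap K) (fun j i => hK i j) hc v u j

theorem colUpdate_sub_le [Nonempty ι] (hK : ∀ i j, 0 < K i j) {a : ℝ}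
    (ha : ∀ j j' i, K i j' ≤ a * K i j) (u : ι → ℝ) (v : κ → ℝ) (j j' : κ) :
    colUpdate K c u v j - colUpdate K c u v j' ≤ log (c j) - log (c j') + log a := by
  rw [colUpdate_eq_rowUpdate_swap]
  exact rowUpdate_sub_le (fun j i => hK i j) ha v u j j'

end

variable [Fintype ι] [Fintype κ]

/-- The dual objective `ψ`; the paper's `ψ̃` is its excess over the minimum. -/
noncomputable def potential (K : ι → κ → ℝ) (r : ι → ℝ) (c : κ → ℝ) (u : ι → ℝ) (v : κ → ℝ) :
    ℝ :=
  ∑ i, ∑ j, scaling K u v i j - ∑ i, r i * u i - ∑ j, c j * v j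

noncomputable def marginalError (K : ι → κ → ℝ) (r : ι → ℝ) (c : κ → ℝ) (u : ι → ℝ)
    (v : κ → ℝ) : ℝ :=
  ∑ i, |∑ j, scaling K u v i j - r i| + ∑ j, |∑ i, scaling K u v i j - c j|

theorem potential_swap (K : ι → κ → ℝ) (r : ι → ℝ) (c : κ → ℝ) (u : ι → ℝ) (v : κ → ℝ) :
    potential (swap K) c r v u = potential K r c u v := by
  simp only [potential, scaling_swap]
  rw [sum_comm]; ring

theorem marginalError_swap (K : ι → κ → ℝ) (r : ι → ℝ) (c : κ → ℝ) (u : ι → ℝ) (v : κ → ℝ) :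
    marginalError (swap K) c r v u = marginalError K r c u v := by
  simp only [marginalError, scaling_swap]; ring

theorem potential_sub_le (hK : ∀ i j, 0 ≤ K i j) (u u' : ι → ℝ) (v v' : κ → ℝ) :
    potential K r c u v - potential K r c u' v' ≤
      ∑ i, (∑ j, scaling K u v i j - r i) * (u i - u' i)
        + ∑ j, (∑ i, scaling K u v i j - c j) * (v j - v' j) := by
  have hconv : ∀ i j, scaling K u v i j + scaling K u v i j * (u' i - u i)
      + scaling K u v i j * (v' j - v j) ≤ scaling K u' v' i j := fun i j => by
    have hB : 0 ≤ scaling K u v i j := by have := hK i j; unfold scaling; positivity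
    have : scaling K u' v' i j = scaling K u v i j * exp ((u' i - u i) + (v' j - v j)) := by
      simp only [scaling, exp_add, exp_sub]; field_simp
    rw [this]
    nlinarith [add_one_le_exp ((u' i - u i) + (v' j - v j))]
  have hsum := sum_le_sum fun i (_ : i ∈ univ) => sum_le_sum fun j (_ : j ∈ univ) => hconv i j
  simp only [sum_add_distrib] at hsum
  rw [sum_comm (f := fun i j => scaling K u v i j * (v' j - v j))] at hsum
  simp only [← sum_mul] at hsum
  simp only [potential, mul_sub, sub_mul, sum_sub_distrib] at hsum ⊢
  linarith

theorem potential_sub_le_mul_marginalError [Nonempty ι] [Nonempty κ] (hK : ∀ i j, 0 ≤ K i j)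
    (hr1 : ∑ i, r i = 1) (hc1 : ∑ j, c j = 1) {u u' : ι → ℝ} {v v' : κ → ℝ} {R : ℝ}
    (hmass : ∑ i, ∑ j, scaling K u v i j = 1)
    (hu : ∀ i i', u i - u i' ≤ R) (hu' : ∀ i i', u' i - u' i' ≤ R)
    (hv : ∀ j j', v j - v j' ≤ R) (hv' : ∀ j j', v' j - v' j' ≤ R) :
    potential K r c u v - potential K r c u' v' ≤ R * marginalError K r c u v := by
  have hrow := sum_mul_le_sum_abs_mul (x := fun i => ∑ j, scaling K u v i j - r i)
    (y := fun i => u i - u' i) (R := R) (by rw [sum_sub_distrib, hmass, hr1, sub_self])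
    (fun i i' => by linarith [hu i i', hu' i' i])
  have hcol := sum_mul_le_sum_abs_mul (x := fun j => ∑ i, scaling K u v i j - c j)
    (y := fun j => v j - v' j) (R := R) (by rw [sum_sub_distrib, sum_comm, hmass, hc1, sub_self])
    (fun j j' => by linarith [hv j j', hv' j' j])
  have := potential_sub_le (r := r) (c := c) hK u u' v v'
  rw [marginalError]
  linarith

theorem sq_marginalError_div_two_le_rowUpdate [Nonempty κ] (hK : ∀ i j, 0 < K i j)
    (hr : ∀ i, 0 < r i)
    (hr1 : ∑ i, r i = 1) (hc1 : ∑ j, c j = 1) {u : ι → ℝ} {v : κ → ℝ}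
    (hcol : ∀ j, ∑ i, scaling K u v i j = c j) :
    marginalError K r c u v ^ 2 / 2 ≤
      potential K r c u v - potential K r c (rowUpdate K r u v) v := by
  set q : ι → ℝ := fun i => ∑ j, scaling K u v i j
  have hq : ∀ i, 0 < q i := sum_scaling_pos hK u v
  have hq1 : ∑ i, q i = 1 := by simp only [q]; rw [sum_comm]; simp only [hcol, hc1]
  have herr : marginalError K r c u v = ∑ i, |r i - q i| := by
    simp only [marginalError, hcol, sub_self, abs_zero, sum_const_zero, add_zero, abs_sub_comm]
    rfl
  have hupdate : ∑ i, r i * rowUpdate K r u v i = ∑ i, r i * u i + ∑ i, r i * log (r i / q i) := by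
    rw [← sum_add_distrib]
    refine sum_congr rfl fun i _ => ?_
    rw [rowUpdate, log_div (hr i).ne' (hq i).ne']
    ring
  have hpot : potential K r c u v - potential K r c (rowUpdate K r u v) v
      = ∑ i, r i * log (r i / q i) := by
    simp only [potential, sum_scaling_rowUpdate hK hr, hr1]
    linarith [show ∑ i, ∑ j, scaling K u v i j = 1 from hq1]
  rw [herr, hpot]
  exact sq_sum_abs_sub_div_two_le_sum_mul_log_div hr hq hr1 hq1

theorem sq_marginalError_div_two_le_colUpdate [Nonempty ι] (hK : ∀ i j, 0 < K i j)
    (hc : ∀ j, 0 < c j) (hr1 : ∑ i, r i = 1) (hc1 : ∑ j, c j = 1) {u : ι → ℝ} {v : κ → ℝ}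
    (hrow : ∀ i, ∑ j, scaling K u v i j = r i) :
    marginalError K r c u v ^ 2 / 2 ≤
      potential K r c u v - potential K r c u (colUpdate K c u v) := by
  have : marginalError (swap K) c r v u ^ 2 / 2 ≤
      potential (swap K) c r v u - potential (swap K) c r (rowUpdate (swap K) c v u) u :=
    sq_marginalError_div_two_le_rowUpdate (fun j i => hK i j) hc hc1 hr1
      fun i => by simpa only [scaling_swap] using hrow i
  rwa [← colUpdate_eq_rowUpdate_swap, potential_swap K r c u v, potential_swap K r c u,
    marginalError_swap] at this

structure IsIteration (K : ι → κ → ℝ) (r : ι → ℝ) (c : κ → ℝ) (u : ℕ → ι → ℝ)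
    (v : ℕ → κ → ℝ) : Prop where
  even_step : ∀ k, Even k → u (k + 1) = rowUpdate K r (u k) (v k) ∧ v (k + 1) = v k
  odd_step : ∀ k, ¬Even k → v (k + 1) = colUpdate K c (u k) (v k) ∧ u (k + 1) = u k

namespace IsIteration

variable {u : ℕ → ι → ℝ} {v : ℕ → κ → ℝ}

theorem exists_eq_rowUpdate (hS : IsIteration K r c u v) (k : ℕ) :
    ∃ m, u (k + 2) = rowUpdate K r (u m) (v m) := by
  by_cases hk : Even k
  · exact ⟨k, (hS.odd_step (k + 1) fun h => Nat.even_add_one.1 h hk).2.trans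
      (hS.even_step k hk).1⟩
  · exact ⟨k + 1, (hS.even_step (k + 1) (Nat.even_add_one.2 hk)).1⟩

theorem exists_eq_colUpdate (hS : IsIteration K r c u v) (k : ℕ) :
    ∃ m, v (k + 2) = colUpdate K c (u m) (v m) := by
  by_cases hk : Even k
  · exact ⟨k + 1, (hS.odd_step (k + 1) fun h => Nat.even_add_one.1 h hk).1⟩
  · exact ⟨k, (hS.even_step (k + 1) (Nat.even_add_one.2 hk)).2.trans (hS.odd_step k hk).1⟩

theorem sub_le [Nonempty ι] [Nonempty κ] (hS : IsIteration K r c u v) (hK : ∀ i j, 0 < K i j)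
    {a R : ℝ} (hrow : ∀ i i' j, K i' j ≤ a * K i j) (hcol : ∀ j j' i, K i j' ≤ a * K i j)
    (hRr : ∀ i i', log (r i) - log (r i') + log a ≤ R)
    (hRc : ∀ j j', log (c j) - log (c j') + log a ≤ R) (k : ℕ) :
    (∀ i i', u (k + 2) i - u (k + 2) i' ≤ R) ∧ (∀ j j', v (k + 2) j - v (k + 2) j' ≤ R) := by
  obtain ⟨m, hu⟩ := hS.exists_eq_rowUpdate k
  obtain ⟨m', hv⟩ := hS.exists_eq_colUpdate k
  exact ⟨fun i i' => hu ▸ (rowUpdate_sub_le hK hrow _ _ i i').trans (hRr i i'),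
    fun j j' => hv ▸ (colUpdate_sub_le hK hcol _ _ j j').trans (hRc j j')⟩

theorem sum_scaling_of_even [Nonempty κ] (hS : IsIteration K r c u v) (hK : ∀ i j, 0 < K i j)
    (hr : ∀ i, 0 < r i) {k : ℕ} (hk : Even k) (i : ι) :
    ∑ j, scaling K (u (k + 1)) (v (k + 1)) i j = r i := by
  rw [(hS.even_step k hk).1, (hS.even_step k hk).2]
  exact sum_scaling_rowUpdate hK hr _ _ i

theorem sum_scaling_of_not_even [Nonempty ι] (hS : IsIteration K r c u v)
    (hK : ∀ i j, 0 < K i j) (hc : ∀ j, 0 < c j) {k : ℕ} (hk : ¬Even k) (j : κ) :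
    ∑ i, scaling K (u (k + 1)) (v (k + 1)) i j = c j := by
  rw [(hS.odd_step k hk).1, (hS.odd_step k hk).2]
  exact sum_scaling_colUpdate hK hc _ _ j

theorem sum_sum_scaling [Nonempty ι] [Nonempty κ] (hS : IsIteration K r c u v)
    (hK : ∀ i j, 0 < K i j) (hr : ∀ i, 0 < r i) (hc : ∀ j, 0 < c j)
    (hr1 : ∑ i, r i = 1) (hc1 : ∑ j, c j = 1) (k : ℕ) :
    ∑ i, ∑ j, scaling K (u (k + 1)) (v (k + 1)) i j = 1 := by
  by_cases hk : Even k
  · simp only [hS.sum_scaling_of_even hK hr hk, hr1]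
  · rw [sum_comm]
    simp only [hS.sum_scaling_of_not_even hK hc hk, hc1]

theorem sq_marginalError_div_two_le [Nonempty ι] [Nonempty κ] (hS : IsIteration K r c u v)
    (hK : ∀ i j, 0 < K i j) (hr : ∀ i, 0 < r i) (hc : ∀ j, 0 < c j)
    (hr1 : ∑ i, r i = 1) (hc1 : ∑ j, c j = 1) (k : ℕ) :
    marginalError K r c (u (k + 1)) (v (k + 1)) ^ 2 / 2 ≤
      potential K r c (u (k + 1)) (v (k + 1)) - potential K r c (u (k + 2)) (v (k + 2)) := by
  by_cases hk : Even k
  · have hk1 : ¬Even (k + 1) := fun h => Nat.even_add_one.1 h hk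
    rw [(hS.odd_step (k + 1) hk1).1, (hS.odd_step (k + 1) hk1).2]
    exact sq_marginalError_div_two_le_colUpdate hK hc hr1 hc1 (hS.sum_scaling_of_even hK hr hk)
  · have hk1 : Even (k + 1) := Nat.even_add_one.2 hk
    rw [(hS.even_step (k + 1) hk1).1, (hS.even_step (k + 1) hk1).2]
    exact sq_marginalError_div_two_le_rowUpdate hK hr hr1 hc1
      (hS.sum_scaling_of_not_even hK hc hk)

end IsIteration

end Sinkhorn

theorem stmt_10_general (n : ℕ) [NeZero n] (C : Fin n → Fin n → ℝ) (hC : ∀ i j, 0 ≤ C i j)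
    (γ ε₀ : ℝ) (hγ : 0 < γ) (hε : 0 < ε₀)
    (r c : Fin n → ℝ) (hr : ∀ i, 0 < r i) (hc : ∀ j, 0 < c j)
    (hr1 : ∑ i, r i = 1) (hc1 : ∑ j, c j = 1)
    (B : (Fin n → ℝ) → (Fin n → ℝ) → Fin n → Fin n → ℝ)
    (hB : ∀ u v i j, B u v i j = Real.exp (u i) * Real.exp (-(C i j) / γ) * Real.exp (v j))
    (u v : ℕ → Fin n → ℝ)
    (heven : ∀ k, Even k →
      (∀ i, u (k + 1) i = u k i + Real.log (r i) - Real.log (∑ j, B (u k) (v k) i j)) ∧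
      v (k + 1) = v k)
    (hodd : ∀ k, ¬ Even k →
      (∀ j, v (k + 1) j = v k j + Real.log (c j) - Real.log (∑ i, B (u k) (v k) i j)) ∧
      u (k + 1) = u k)
    (R : ℝ)
    (hR : R = -Real.log (Real.exp
        (-(Finset.univ.sup' Finset.univ_nonempty fun i =>
            Finset.univ.sup' Finset.univ_nonempty fun j => |C i j|) / γ) *
      min (Finset.univ.inf' Finset.univ_nonempty r)
        (Finset.univ.inf' Finset.univ_nonempty c))) :
    ∃ k : ℕ, (k : ℝ) ≤ 2 + 4 * R / ε₀ ∧
      (∑ i, |(∑ j, B (u k) (v k) i j) - r i|) +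
        (∑ j, |(∑ i, B (u k) (v k) i j) - c j|) ≤ ε₀ := by
  set M := univ.sup' univ_nonempty fun i => univ.sup' univ_nonempty fun j => |C i j|
  set ρ := min (univ.inf' univ_nonempty r) (univ.inf' univ_nonempty c)
  set K : Fin n → Fin n → ℝ := fun i j => exp (-C i j / γ)
  obtain rfl : B = Sinkhorn.scaling K := by funext u v i j; exact hB u v i j
  have hS : Sinkhorn.IsIteration K r c u v :=
    ⟨fun k hk => ⟨funext (heven k hk).1, (heven k hk).2⟩,
      fun k hk => ⟨funext (hodd k hk).1, (hodd k hk).2⟩⟩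
  have hK : ∀ i j, 0 < K i j := fun i j => exp_pos _
  have hCM : ∀ i j, C i j ≤ M := fun i j =>
    (le_abs_self _).trans (le_sup'_of_le _ (mem_univ i) (le_sup' (fun j => |C i j|) (mem_univ j)))
  have hρ : 0 < ρ := lt_min ((lt_inf'_iff _).2 fun i _ => hr i) ((lt_inf'_iff _).2 fun j _ => hc j)
  have hρr : ∀ i, ρ ≤ r i := fun i => (min_le_left _ _).trans (inf'_le r (mem_univ i))
  have hρc : ∀ j, ρ ≤ c j := fun j => (min_le_right _ _).trans (inf'_le c (mem_univ j))
  have hRρ : R = log (exp (M / γ)) - log ρ := by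
    rw [hR, log_mul (exp_pos _).ne' hρ.ne', log_exp, log_exp]; ring
  have hosc := hS.sub_le (R := R) hK
    (fun i i' j => exp_neg_div_le_exp_mul_exp_neg_div hγ (hC i' j) (hCM i j))
    (fun j j' i => exp_neg_div_le_exp_mul_exp_neg_div hγ (hC i j') (hCM i j))
    (fun i i' => by linarith [log_sub_log_le_neg_log hρ hρr hr1 i i'])
    (fun j j' => by linarith [log_sub_log_le_neg_log hρ hρc hc1 j j'])
  have hR0 : 0 ≤ R := by simpa using (hosc 0).1 0 0
  obtain ⟨k, hkR, hk⟩ := exists_le_of_sq_le_sub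
    (ψ := fun k => Sinkhorn.potential K r c (u (k + 2)) (v (k + 2)))
    (e := fun k => Sinkhorn.marginalError K r c (u (k + 2)) (v (k + 2))) hR0 hε
    (fun k m => Sinkhorn.potential_sub_le_mul_marginalError (fun i j => (hK i j).le) hr1 hc1
      (hS.sum_sum_scaling hK hr hc hr1 hc1 (k + 1)) (hosc k).1 (hosc m).1 (hosc k).2 (hosc m).2)
    (fun k => hS.sq_marginalError_div_two_le hK hr hc hr1 hc1 (k + 1))
  exact ⟨k + 2, by push_cast; linarith, hk⟩

theorem stmt_10 (n : ℕ) [NeZero n] (C : Fin n → Fin n → ℝ) (hC : ∀ i j, 0 ≤ C i j)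
    (γ ε₀ : ℝ) (hγ : 0 < γ) (hε : 0 < ε₀)
    (r c : Fin n → ℝ) (hr : ∀ i, 0 < r i) (hc : ∀ j, 0 < c j)
    (hr1 : ∑ i, r i = 1) (hc1 : ∑ j, c j = 1)
    (B : (Fin n → ℝ) → (Fin n → ℝ) → Fin n → Fin n → ℝ)
    (hB : ∀ u v i j, B u v i j = Real.exp (u i) * Real.exp (-(C i j) / γ) * Real.exp (v j))
    (u v : ℕ → Fin n → ℝ) (hu0 : u 0 = 0) (hv0 : v 0 = 0)
    (heven : ∀ k, Even k →
      (∀ i, u (k + 1) i = u k i + Real.log (r i) - Real.log (∑ j, B (u k) (v k) i j)) ∧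
      v (k + 1) = v k)
    (hodd : ∀ k, ¬ Even k →
      (∀ j, v (k + 1) j = v k j + Real.log (c j) - Real.log (∑ i, B (u k) (v k) i j)) ∧
      u (k + 1) = u k)
    (R : ℝ)
    (hR : R = -Real.log (Real.exp
        (-(Finset.univ.sup' Finset.univ_nonempty fun i =>
            Finset.univ.sup' Finset.univ_nonempty fun j => |C i j|) / γ) *
      min (Finset.univ.inf' Finset.univ_nonempty r)
        (Finset.univ.inf' Finset.univ_nonempty c))) :
    ∃ k : ℕ, (k : ℝ) ≤ 2 + 4 * R / ε₀ ∧
      (∑ i, |(∑ j, B (u k) (v k) i j) - r i|) +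
        (∑ j, |(∑ i, B (u k) (v k) i j) - c j|) ≤ ε₀ :=
  stmt_10_general n C hC γ ε₀ hγ hε r c hr hc hr1 hc1 B hB u v heven hodd R hR
end

section
/- Let B ∈ ℝ₊^{n×n}, r, c ∈ Δₙ. Define x_i = min{r_i/(B1ₙ)_i, 1}, X = diag(x), B₀ = XB, y_j = min{c_j/(B₀ᵀ1ₙ)_j, 1}, Y = diag(y), B₁ = B₀Y, p = r − B₁1ₙ, q = c − B₁ᵀ1ₙ, and G = B₁ + pqᵀ/‖p‖₁. Then G ≥ 0 entrywise, G1ₙ = r, and Gᵀ1ₙ = c, i.e., G ∈ U_{r,c}. -/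
theorem stmt_11 (n : ℕ) (B : Fin n → Fin n → ℝ) (hB : ∀ i j, 0 ≤ B i j)
    (r c : Fin n → ℝ) (hr : ∀ i, 0 ≤ r i) (hc : ∀ j, 0 ≤ c j)
    (hr1 : ∑ i, r i = 1) (hc1 : ∑ j, c j = 1)
    (x : Fin n → ℝ) (hx : ∀ i, x i = min (r i / ∑ j, B i j) 1)
    (B₀ : Fin n → Fin n → ℝ) (hB₀ : ∀ i j, B₀ i j = x i * B i j)
    (y : Fin n → ℝ) (hy : ∀ j, y j = min (c j / ∑ i, B₀ i j) 1)
    (B₁ : Fin n → Fin n → ℝ) (hB₁ : ∀ i j, B₁ i j = B₀ i j * y j)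
    (p q : Fin n → ℝ)
    (hp : ∀ i, p i = r i - ∑ j, B₁ i j) (hq : ∀ j, q j = c j - ∑ i, B₁ i j)
    (hpne : p ≠ 0)
    (G : Fin n → Fin n → ℝ)
    (hG : ∀ i j, G i j = B₁ i j + p i * q j / ∑ i', |p i'|) :
    (∀ i j, 0 ≤ G i j) ∧ (∀ i, ∑ j, G i j = r i) ∧ (∀ j, ∑ i, G i j = c j) := by
  have hxnn : ∀ i, 0 ≤ x i := fun i => by
    rw [hx]
    exact le_min (div_nonneg (hr i) (Finset.sum_nonneg fun j _ => hB i j)) one_pos.le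
  have hx1 : ∀ i, x i ≤ 1 := fun i => by rw [hx]; exact min_le_right _ _
  have hB0nn : ∀ i j, 0 ≤ B₀ i j := fun i j => by
    rw [hB₀]; exact mul_nonneg (hxnn i) (hB i j)
  have hrow0 : ∀ i, ∑ j, B₀ i j ≤ r i := by
    intro i
    have : ∑ j, B₀ i j = x i * ∑ j, B i j := by
      rw [Finset.mul_sum]; exact Finset.sum_congr rfl fun j _ => hB₀ i j
    rw [this]
    rcases eq_or_lt_of_le (Finset.sum_nonneg fun j _ => hB i j) with h | h
    · rw [← h, mul_zero]; exact hr i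
    · have : x i ≤ r i / ∑ j, B i j := by rw [hx]; exact min_le_left _ _
      calc x i * ∑ j, B i j ≤ (r i / ∑ j, B i j) * ∑ j, B i j :=
            mul_le_mul_of_nonneg_right this h.le
        _ = r i := div_mul_cancel₀ _ h.ne'
  have hynn : ∀ j, 0 ≤ y j := fun j => by
    rw [hy]
    exact le_min (div_nonneg (hc j) (Finset.sum_nonneg fun i _ => hB0nn i j)) one_pos.le
  have hy1 : ∀ j, y j ≤ 1 := fun j => by rw [hy]; exact min_le_right _ _
  have hB1nn : ∀ i j, 0 ≤ B₁ i j := fun i j => by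
    rw [hB₁]; exact mul_nonneg (hB0nn i j) (hynn j)
  have hcol1 : ∀ j, ∑ i, B₁ i j ≤ c j := by
    intro j
    have : ∑ i, B₁ i j = (∑ i, B₀ i j) * y j := by
      rw [Finset.sum_mul]; exact Finset.sum_congr rfl fun i _ => hB₁ i j
    rw [this]
    rcases eq_or_lt_of_le (Finset.sum_nonneg fun i _ => hB0nn i j) with h | h
    · rw [← h, zero_mul]; exact hc j
    · have hyle : y j ≤ c j / ∑ i, B₀ i j := by rw [hy]; exact min_le_left _ _
      calc (∑ i, B₀ i j) * y j ≤ (∑ i, B₀ i j) * (c j / ∑ i, B₀ i j) :=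
            mul_le_mul_of_nonneg_left hyle h.le
        _ = c j := mul_div_cancel₀ _ h.ne'
  have hrow1 : ∀ i, ∑ j, B₁ i j ≤ r i := by
    intro i
    refine le_trans (Finset.sum_le_sum fun j _ => ?_) (hrow0 i)
    rw [hB₁]
    calc B₀ i j * y j ≤ B₀ i j * 1 := mul_le_mul_of_nonneg_left (hy1 j) (hB0nn i j)
      _ = B₀ i j := mul_one _
  have hpnn : ∀ i, 0 ≤ p i := fun i => by rw [hp]; linarith [hrow1 i]
  have hqnn : ∀ j, 0 ≤ q j := fun j => by rw [hq]; linarith [hcol1 j]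
  have habs : ∑ i', |p i'| = ∑ i', p i' :=
    Finset.sum_congr rfl fun i _ => abs_of_nonneg (hpnn i)
  have hpq : ∑ i, p i = ∑ j, q j := by
    have : (∑ i, ∑ j, B₁ i j) = ∑ j, ∑ i, B₁ i j := Finset.sum_comm
    simp only [hp, hq, Finset.sum_sub_distrib, hr1, hc1, this]
  have hppos : 0 < ∑ i, p i := by
    obtain ⟨i, hi⟩ := Function.ne_iff.mp hpne
    exact Finset.sum_pos' (fun i _ => hpnn i)
      ⟨i, Finset.mem_univ i, lt_of_le_of_ne (hpnn i) (Ne.symm hi)⟩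
  have hsne : (∑ i', |p i'|) ≠ 0 := by rw [habs]; exact hppos.ne'
  refine ⟨fun i j => ?_, fun i => ?_, fun j => ?_⟩
  · rw [hG]
    have : 0 ≤ ∑ i', |p i'| := Finset.sum_nonneg fun i _ => abs_nonneg _
    exact add_nonneg (hB1nn i j) (div_nonneg (mul_nonneg (hpnn i) (hqnn j)) this)
  · have key : ∑ j, p i * q j / ∑ i', |p i'| = p i := by
      rw [← Finset.sum_div, ← Finset.mul_sum, ← hpq, habs, mul_div_assoc,
        div_self hppos.ne', mul_one]
    calc ∑ j, G i j = ∑ j, (B₁ i j + p i * q j / ∑ i', |p i'|) :=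
          Finset.sum_congr rfl fun j _ => hG i j
      _ = (∑ j, B₁ i j) + ∑ j, p i * q j / ∑ i', |p i'| := Finset.sum_add_distrib
      _ = (∑ j, B₁ i j) + p i := by rw [key]
      _ = r i := by rw [hp]; ring
  · have key : ∑ i, p i * q j / ∑ i', |p i'| = q j := by
      rw [← Finset.sum_div, ← Finset.sum_mul, habs, mul_comm, mul_div_assoc,
        div_self hppos.ne', mul_one]
    calc ∑ i, G i j = ∑ i, (B₁ i j + p i * q j / ∑ i', |p i'|) :=
          Finset.sum_congr rfl fun i _ => hG i j
      _ = (∑ i, B₁ i j) + ∑ i, p i * q j / ∑ i', |p i'| := Finset.sum_add_distrib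
      _ = (∑ i, B₁ i j) + q j := by rw [key]
      _ = c j := by rw [hq]; ring
end

section
/- With G the output of the rounding procedure applied to B ∈ ℝ₊^{n×n} and r, c ∈ Δₙ (as in Algorithm Round), one has ‖G − B‖₁ ≤ 2(‖B1ₙ − r‖₁ + ‖Bᵀ1ₙ − c‖₁), where ‖·‖₁ on matrices is the entrywise ℓ₁ norm. -/
private lemma scale_id (a b : ℝ) (ha : 0 ≤ a) (hb : 0 ≤ b) :
    a - min (b / a) 1 * a = max (a - b) 0 := by
  rcases eq_or_lt_of_le ha with h | h
  · rw [← h]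
    simp
    linarith
  · rcases le_or_gt b a with hba | hba
    · rw [min_eq_left (by rw [div_le_one h]; exact hba), div_mul_cancel₀ _ h.ne',
        max_eq_left (by linarith)]
    · rw [min_eq_right (by rw [le_div_iff₀ h]; linarith), max_eq_right (by linarith)]
      ring

theorem stmt_12 (n : ℕ) (B : Fin n → Fin n → ℝ) (hB : ∀ i j, 0 ≤ B i j)
    (r c : Fin n → ℝ) (hr : ∀ i, 0 ≤ r i) (hc : ∀ j, 0 ≤ c j)
    (hr1 : ∑ i, r i = 1) (hc1 : ∑ j, c j = 1)
    (x : Fin n → ℝ) (hx : ∀ i, x i = min (r i / ∑ j, B i j) 1)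
    (B₀ : Fin n → Fin n → ℝ) (hB₀ : ∀ i j, B₀ i j = x i * B i j)
    (y : Fin n → ℝ) (hy : ∀ j, y j = min (c j / ∑ i, B₀ i j) 1)
    (B₁ : Fin n → Fin n → ℝ) (hB₁ : ∀ i j, B₁ i j = B₀ i j * y j)
    (p q : Fin n → ℝ)
    (hp : ∀ i, p i = r i - ∑ j, B₁ i j) (hq : ∀ j, q j = c j - ∑ i, B₁ i j)
    (hpne : p ≠ 0)
    (G : Fin n → Fin n → ℝ)
    (hG : ∀ i j, G i j = B₁ i j + p i * q j / ∑ i', |p i'|) :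
    ∑ i, ∑ j, |G i j - B i j| ≤
      2 * ((∑ i, |(∑ j, B i j) - r i|) + ∑ j, |(∑ i, B i j) - c j|) := by
  -- basic nonnegativity / bounds
  have hRnn : ∀ i, 0 ≤ ∑ j, B i j := fun i => Finset.sum_nonneg fun j _ => hB i j
  have hx0 : ∀ i, 0 ≤ x i := fun i => by
    rw [hx]; exact le_min (div_nonneg (hr i) (hRnn i)) zero_le_one
  have hx1 : ∀ i, x i ≤ 1 := fun i => by rw [hx]; exact min_le_right _ _
  have hB₀nn : ∀ i j, 0 ≤ B₀ i j := fun i j => by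
    rw [hB₀]; exact mul_nonneg (hx0 i) (hB i j)
  have hB₀le : ∀ i j, B₀ i j ≤ B i j := fun i j => by
    rw [hB₀]
    calc x i * B i j ≤ 1 * B i j := mul_le_mul_of_nonneg_right (hx1 i) (hB i j)
    _ = B i j := one_mul _
  have hC₀nn : ∀ j, 0 ≤ ∑ i, B₀ i j := fun j => Finset.sum_nonneg fun i _ => hB₀nn i j
  have hy0 : ∀ j, 0 ≤ y j := fun j => by
    rw [hy]; exact le_min (div_nonneg (hc j) (hC₀nn j)) zero_le_one
  have hy1 : ∀ j, y j ≤ 1 := fun j => by rw [hy]; exact min_le_right _ _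
  have hB₁nn : ∀ i j, 0 ≤ B₁ i j := fun i j => by
    rw [hB₁]; exact mul_nonneg (hB₀nn i j) (hy0 j)
  have hB₁le : ∀ i j, B₁ i j ≤ B₀ i j := fun i j => by
    rw [hB₁]
    calc B₀ i j * y j ≤ B₀ i j * 1 := mul_le_mul_of_nonneg_left (hy1 j) (hB₀nn i j)
    _ = B₀ i j := mul_one _
  -- row/column scaling identities
  have hrow₀ : ∀ i, ∑ j, B₀ i j = x i * ∑ j, B i j := fun i => by
    simp only [hB₀]; rw [Finset.mul_sum]
  have hrowid : ∀ i, (∑ j, B i j) - ∑ j, B₀ i j = max ((∑ j, B i j) - r i) 0 := by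
    intro i
    rw [hrow₀ i, hx i]
    exact scale_id _ _ (hRnn i) (hr i)
  have hcol₁ : ∀ j, ∑ i, B₁ i j = y j * ∑ i, B₀ i j := fun j => by
    simp only [hB₁]; rw [Finset.mul_sum]; exact Finset.sum_congr rfl fun i _ => mul_comm _ _
  have hcolid : ∀ j, (∑ i, B₀ i j) - ∑ i, B₁ i j = max ((∑ i, B₀ i j) - c j) 0 := by
    intro j
    rw [hcol₁ j, hy j]
    exact scale_id _ _ (hC₀nn j) (hc j)
  -- p, q nonneg
  have hp0 : ∀ i, 0 ≤ p i := by
    intro i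
    rw [hp]
    have h1 : ∑ j, B₁ i j ≤ ∑ j, B₀ i j := Finset.sum_le_sum fun j _ => hB₁le i j
    have h2 := hrowid i
    have h3 : (∑ j, B i j) - r i ≤ max ((∑ j, B i j) - r i) 0 := le_max_left _ _
    linarith
  have hq0 : ∀ j, 0 ≤ q j := by
    intro j
    rw [hq]
    have h2 := hcolid j
    have h3 : (∑ i, B₀ i j) - c j ≤ max ((∑ i, B₀ i j) - c j) 0 := le_max_left _ _
    linarith
  -- s = ∑ p > 0
  have habs : ∑ i', |p i'| = ∑ i, p i := Finset.sum_congr rfl fun i _ => abs_of_nonneg (hp0 i)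
  have hspos : 0 < ∑ i', |p i'| := by
    obtain ⟨i, hi⟩ := Function.ne_iff.mp hpne
    have : 0 < |p i| := abs_pos.mpr hi
    calc 0 < |p i| := this
    _ ≤ ∑ i', |p i'| := Finset.single_le_sum (fun k _ => abs_nonneg (p k)) (Finset.mem_univ i)
  -- global sums
  have hsum_p : ∑ i, p i = 1 - ∑ i, ∑ j, B₁ i j := by
    simp only [hp]; rw [Finset.sum_sub_distrib, hr1]
  have hsum_q : ∑ j, q j = 1 - ∑ i, ∑ j, B₁ i j := by
    simp only [hq]; rw [Finset.sum_sub_distrib, hc1, Finset.sum_comm]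
  -- pointwise bound
  have hpt : ∀ i j, |G i j - B i j| ≤ (B i j - B₁ i j) + p i * q j / ∑ i', |p i'| := by
    intro i j
    rw [hG]
    have h1 : B₁ i j + p i * q j / ∑ i', |p i'| - B i j
        = (B₁ i j - B i j) + p i * q j / ∑ i', |p i'| := by ring
    rw [h1]
    have h2 : 0 ≤ p i * q j / ∑ i', |p i'| :=
      div_nonneg (mul_nonneg (hp0 i) (hq0 j)) hspos.le
    have h3 : B₁ i j ≤ B i j := le_trans (hB₁le i j) (hB₀le i j)
    rw [abs_le]
    constructor <;> [skip; skip] <;> nlinarith [abs_nonneg (B₁ i j - B i j)]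
  -- sum the pointwise bound
  have hmain : ∑ i, ∑ j, |G i j - B i j| ≤
      ((∑ i, ∑ j, B i j) - ∑ i, ∑ j, B₁ i j) + ∑ i, p i := by
    have h1 : ∑ i, ∑ j, |G i j - B i j| ≤
        ∑ i, ∑ j, ((B i j - B₁ i j) + p i * q j / ∑ i', |p i'|) :=
      Finset.sum_le_sum fun i _ => Finset.sum_le_sum fun j _ => hpt i j
    have h2 : ∑ i, ∑ j, ((B i j - B₁ i j) + p i * q j / ∑ i', |p i'|)
        = ((∑ i, ∑ j, B i j) - ∑ i, ∑ j, B₁ i j)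
          + (∑ i, p i) * (∑ j, q j) / ∑ i', |p i'| := by
      rw [Finset.sum_mul_sum]
      simp only [Finset.sum_add_distrib, Finset.sum_sub_distrib, Finset.sum_div]
    have h3 : (∑ i, p i) * (∑ j, q j) / (∑ i', |p i'|) = ∑ i, p i := by
      rw [hsum_q, ← hsum_p, ← habs]
      exact mul_div_cancel_left₀ _ hspos.ne'
    rw [h2, h3] at h1
    exact h1
  -- mass accounting
  have hA : (∑ i, ∑ j, B i j) - (∑ i, ∑ j, B₀ i j) = ∑ i, max ((∑ j, B i j) - r i) 0 := by
    rw [← Finset.sum_sub_distrib]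
    exact Finset.sum_congr rfl fun i _ => hrowid i
  have hD : (∑ i, ∑ j, B₀ i j) - (∑ i, ∑ j, B₁ i j) = ∑ j, max ((∑ i, B₀ i j) - c j) 0 := by
    rw [Finset.sum_comm (f := fun i j => B₀ i j), Finset.sum_comm (f := fun i j => B₁ i j),
      ← Finset.sum_sub_distrib]
    exact Finset.sum_congr rfl fun j _ => hcolid j
  have h2A : 2 * ∑ i, max ((∑ j, B i j) - r i) 0
      = (∑ i, |(∑ j, B i j) - r i|) + ((∑ i, ∑ j, B i j) - 1) := by
    rw [Finset.mul_sum]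
    have : ∀ i : Fin n, 2 * max ((∑ j, B i j) - r i) 0
        = |(∑ j, B i j) - r i| + ((∑ j, B i j) - r i) := by
      intro i
      rcases le_or_gt (r i) (∑ j, B i j) with h | h
      · rw [max_eq_left (by linarith), abs_of_nonneg (by linarith)]; ring
      · rw [max_eq_right (by linarith), abs_of_neg (by linarith)]; ring
    rw [Finset.sum_congr rfl fun i _ => this i, Finset.sum_add_distrib,
      Finset.sum_sub_distrib, hr1]
  have hDle : ∑ j, max ((∑ i, B₀ i j) - c j) 0 ≤ ∑ j, |(∑ i, B i j) - c j| := by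
    refine Finset.sum_le_sum fun j _ => ?_
    have h1 : ∑ i, B₀ i j ≤ ∑ i, B i j := Finset.sum_le_sum fun i _ => hB₀le i j
    rcases le_or_gt ((∑ i, B₀ i j) - c j) 0 with h | h
    · rw [max_eq_right h]; exact abs_nonneg _
    · rw [max_eq_left h.le]
      calc (∑ i, B₀ i j) - c j ≤ (∑ i, B i j) - c j := by linarith
      _ ≤ |(∑ i, B i j) - c j| := le_abs_self _
  have hE1 : 0 ≤ ∑ i, |(∑ j, B i j) - r i| := Finset.sum_nonneg fun i _ => abs_nonneg _
  linarith
end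

section
/- If B(u_k,v_k)1ₙ = r exactly after a row-update of Sinkhorn's algorithm (with K_{ij} = e^{−C_{ij}/γ} ∈ (0,1]), then for each i, ln(rᵢ/⟨1ₙ, e^{v_k}⟩) ≤ u_{k,i} ≤ −ln(K_min⟨1ₙ, e^{v_k}⟩), where K_min = minᵢⱼ K_{ij}. -/
theorem stmt_18 (n : ℕ) [NeZero n] (K : Fin n → Fin n → ℝ)
    (hKpos : ∀ i j, 0 < K i j) (hKle : ∀ i j, K i j ≤ 1)
    (r : Fin n → ℝ) (hr : ∀ i, 0 < r i) (hr1 : ∑ i, r i = 1)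
    (u v : Fin n → ℝ)
    (hmarg : ∀ i, ∑ j, Real.exp (u i) * K i j * Real.exp (v j) = r i)
    (Kmin : ℝ)
    (hKmin : Kmin = Finset.univ.inf' Finset.univ_nonempty fun i =>
      Finset.univ.inf' Finset.univ_nonempty fun j => K i j) :
    ∀ i, Real.log (r i / ∑ j, Real.exp (v j)) ≤ u i ∧
      u i ≤ -Real.log (Kmin * ∑ j, Real.exp (v j)) := by
  intro i
  set S : ℝ := ∑ j, Real.exp (v j) with hS
  have hSpos : 0 < S := Finset.sum_pos (fun j _ => Real.exp_pos _) Finset.univ_nonempty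
  have hKminpos : 0 < Kmin := by
    rw [hKmin]
    apply Finset.lt_inf'_iff (α := ℝ) _ |>.mpr
    intro a _
    exact (Finset.lt_inf'_iff _).mpr fun b _ => hKpos a b
  have hKminle : ∀ a b, Kmin ≤ K a b := by
    intro a b
    rw [hKmin]
    exact le_trans (Finset.inf'_le _ (Finset.mem_univ a))
      (Finset.inf'_le _ (Finset.mem_univ b))
  have hri1 : r i ≤ 1 := by
    rw [← hr1]
    exact Finset.single_le_sum (fun j _ => (hr j).le) (Finset.mem_univ i)
  constructor
  · -- lower bound: r i ≤ e^{u i} * S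
    have h1 : r i ≤ Real.exp (u i) * S := by
      rw [← hmarg i, hS, Finset.mul_sum]
      apply Finset.sum_le_sum
      intro j _
      have := mul_le_of_le_one_right (Real.exp_pos (u i)).le (hKle i j)
      nlinarith [Real.exp_pos (v j), Real.exp_pos (u i)]
    have h2 : r i / S ≤ Real.exp (u i) := (div_le_iff₀ hSpos).mpr h1
    have := Real.log_le_log (div_pos (hr i) hSpos) h2
    rwa [Real.log_exp] at this
  · -- upper bound: e^{u i} * Kmin * S ≤ r i ≤ 1
    have h1 : Real.exp (u i) * (Kmin * S) ≤ r i := by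
      rw [← hmarg i, hS, ← mul_assoc, Finset.mul_sum]
      apply Finset.sum_le_sum
      intro j _
      gcongr
      exact hKminle i j
    have h2 : Real.exp (u i) ≤ 1 / (Kmin * S) := by
      rw [le_div_iff₀ (by positivity)]
      linarith
    have := Real.log_le_log (Real.exp_pos _) h2
    rw [Real.log_exp, Real.log_div one_ne_zero (by positivity), Real.log_one] at this
    linarith
end

section
/- Given the rounded transport plan X̂ (output of Round applied to B) satisfying ‖X̂ − B‖₁ ≤ 2(‖B1 − r‖₁ + ‖Bᵀ1 − c‖₁), and B satisfying ⟨B,C⟩ ≤ ⟨X*,C⟩ + 2γ ln n + 2(‖B1−r‖₁+‖Bᵀ1−c‖₁)‖C‖∞, with ‖B1−r‖₁+‖Bᵀ1−c‖₁ ≤ ε₀, γ = ε/(4 ln n) and ε₀ = ε/(8‖C‖∞), one has ⟨X̂, C⟩ ≤ ⟨X*, C⟩ + ε. -/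
/-! The rounded plan costs at most `‖X̂ - B‖₁ ‖C‖∞ ≤ 2 E ‖C‖∞` more than `B`, where `E` is the
marginal error of `B`; adding the entropic bias `2γ ln n = ε/2` and the `2 E ‖C‖∞` already in the
bound for `B` gives `ε/2 + 4 ε₀ ‖C‖∞ = ε`. -/

open Finset

theorem Finset.le_sup'_sup' {ι κ α : Type*} [LinearOrder α] {s : Finset ι} {t : Finset κ}
    (hs : s.Nonempty) (ht : t.Nonempty) (f : ι → κ → α) {i : ι} {j : κ}
    (hi : i ∈ s) (hj : j ∈ t) :
    f i j ≤ s.sup' hs fun i => t.sup' ht (f i) :=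
  le_sup'_of_le _ hi (le_sup' (f i) hj)

theorem sum_sum_mul_sub_le_of_abs_le {ι κ : Type*} [Fintype ι] [Fintype κ]
    (X B C : ι → κ → ℝ) {M : ℝ} (hM : ∀ i j, |C i j| ≤ M) :
    ∑ i, ∑ j, X i j * C i j - ∑ i, ∑ j, B i j * C i j ≤ (∑ i, ∑ j, |X i j - B i j|) * M := by
  simp only [← sum_sub_distrib, sum_mul, ← sub_mul]
  refine sum_le_sum fun i _ => sum_le_sum fun j _ => ?_
  calc (X i j - B i j) * C i j ≤ |(X i j - B i j) * C i j| := le_abs_self _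
    _ = |X i j - B i j| * |C i j| := abs_mul _ _
    _ ≤ |X i j - B i j| * M := by gcongr; exact hM i j

theorem stmt_19 (n : ℕ) (hn : 2 ≤ n) (C : Fin n → Fin n → ℝ)
    (Cmax : ℝ)
    (hCmax : Cmax = Finset.univ.sup' (Finset.univ_nonempty_iff.mpr
        ⟨⟨0, by omega⟩⟩) fun i : Fin n =>
      Finset.univ.sup' (Finset.univ_nonempty_iff.mpr ⟨⟨0, by omega⟩⟩) fun j => |C i j|)
    (hCpos : 0 < Cmax)
    (r c : Fin n → ℝ) (ε γ ε₀ : ℝ)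
    (hγ : γ = ε / (4 * Real.log n)) (hε₀ : ε₀ = ε / (8 * Cmax))
    (B Xhat Xstar : Fin n → Fin n → ℝ)
    (hround : ∑ i, ∑ j, |Xhat i j - B i j| ≤
      2 * ((∑ i, |(∑ j, B i j) - r i|) + ∑ j, |(∑ i, B i j) - c j|))
    (hBopt : (∑ i, ∑ j, B i j * C i j) ≤ (∑ i, ∑ j, Xstar i j * C i j) +
      2 * γ * Real.log n +
      2 * ((∑ i, |(∑ j, B i j) - r i|) + ∑ j, |(∑ i, B i j) - c j|) * Cmax)
    (herr : (∑ i, |(∑ j, B i j) - r i|) + (∑ j, |(∑ i, B i j) - c j|) ≤ ε₀) :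
    (∑ i, ∑ j, Xhat i j * C i j) ≤ (∑ i, ∑ j, Xstar i j * C i j) + ε := by
  set E := (∑ i, |(∑ j, B i j) - r i|) + ∑ j, |(∑ i, B i j) - c j|
  have hround_cost : ∑ i, ∑ j, Xhat i j * C i j - ∑ i, ∑ j, B i j * C i j ≤ 2 * E * Cmax :=
    (sum_sum_mul_sub_le_of_abs_le Xhat B C fun i j => hCmax ▸
      Finset.le_sup'_sup' _ _ (fun i j => |C i j|) (mem_univ i) (mem_univ j)).trans
      (mul_le_mul_of_nonneg_right hround hCpos.le)
  have hbias : 2 * γ * Real.log n = ε / 2 := by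
    have hlog : 0 < Real.log n := Real.log_pos (by exact_mod_cast hn)
    rw [hγ]
    field_simp
    ring
  have herr_cost : E * Cmax ≤ ε / 8 :=
    calc E * Cmax ≤ ε₀ * Cmax := mul_le_mul_of_nonneg_right herr hCpos.le
      _ = ε / 8 := by rw [hε₀]; field_simp
  linarith
end
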